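/- Define τ(x,ξ) = −x₂ξ₁ + x₁ξ₂ + x₄ξ₃ − x₃ξ₄ and ς(x,ξ) = x₃ξ₁ + x₄ξ₂ + x₁ξ₃ + x₂ξ₄. Let (x(s), ξ(s)) be a C¹ solution of the Hamiltonian system ẋ = −τ(x,ξ)·T(x) + ς(x,ξ)·X(x), ξ̇ = −τ(x,ξ)·T(ξ) − ς(x,ξ)·X(ξ), with x(0) ∈ H. Then x(s) ∈ H for all s, the curve x is horizontal with respect to span{T,X} (γ ≡ 0 along x), and its horizontal coordinates satisfy α(s) = τ(x(s),ξ(s)) and β(s) = ς(x(s),ξ(s)) for all s. -/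

import Mathlib

open Real Set

noncomputable section

/-- Pseudo-Euclidean inner product of signature (2,2) on ℝ⁴. -/
def ip (x y : Fin 4 → ℝ) : ℝ :=
  -(x 0 * y 0) - x 1 * y 1 + x 2 * y 2 + x 3 * y 3

/-- Anti-de Sitter space H = {x : ⟨x,x⟩ = -1}. -/
def AdS : Set (Fin 4 → ℝ) := {x | ip x x = -1}

/-- The vector field T(x) = (−x₂, x₁, x₄, −x₃). -/
def Tf (x : Fin 4 → ℝ) : Fin 4 → ℝ := ![-(x 1), x 0, x 3, -(x 2)]

/-- The vector field X(x) = (x₃, x₄, x₁, x₂). -/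
def Xf (x : Fin 4 → ℝ) : Fin 4 → ℝ := ![x 2, x 3, x 0, x 1]

/-- The vector field Y(x) = (x₄, −x₃, −x₂, x₁). -/
def Yf (x : Fin 4 → ℝ) : Fin 4 → ℝ := ![x 3, -(x 2), -(x 1), x 0]

/-- The normal vector field N(x) = x. -/
def Nf (x : Fin 4 → ℝ) : Fin 4 → ℝ := x

/-- α(s) = ⟨ċ(s), T(c(s))⟩. -/
def alphaC (c : ℝ → Fin 4 → ℝ) (s : ℝ) : ℝ := ip (deriv c s) (Tf (c s))

/-- β(s) = ⟨ċ(s), X(c(s))⟩. -/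
def betaC (c : ℝ → Fin 4 → ℝ) (s : ℝ) : ℝ := ip (deriv c s) (Xf (c s))

/-- γ(s) = ⟨ċ(s), Y(c(s))⟩. -/
def gammaC (c : ℝ → Fin 4 → ℝ) (s : ℝ) : ℝ := ip (deriv c s) (Yf (c s))

/-- τ(x,ξ) = −x₂ξ₁ + x₁ξ₂ + x₄ξ₃ − x₃ξ₄. -/
def tauF (x ξ : Fin 4 → ℝ) : ℝ :=
  -(x 1 * ξ 0) + x 0 * ξ 1 + x 3 * ξ 2 - x 2 * ξ 3

/-- ς(x,ξ) = x₃ξ₁ + x₄ξ₂ + x₁ξ₃ + x₂ξ₄. -/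
def sigmaF (x ξ : Fin 4 → ℝ) : ℝ :=
  x 2 * ξ 0 + x 3 * ξ 1 + x 0 * ξ 2 + x 1 * ξ 3

/-!
Along the flow, ẋ = −τ T(x) + ς X(x) is a combination of T(x) and X(x), and at every point
T(x), X(x), Y(x) and x are mutually ⟨·,·⟩-orthogonal with ⟨T(x),T(x)⟩ = ⟨x,x⟩ = −⟨X(x),X(x)⟩.
Orthogonality to x makes ⟨x,x⟩ constant, so x stays on H; orthogonality to Y gives γ = 0; and
on H the two norms are −1 and 1, which turns ⟨ẋ,T(x)⟩ into τ and ⟨ẋ,X(x)⟩ into ς.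
-/

lemma ip_comm (u v : Fin 4 → ℝ) : ip u v = ip v u := by
  simp only [ip]; ring

lemma ip_add_left (u v w : Fin 4 → ℝ) : ip (u + v) w = ip u w + ip v w := by
  simp only [ip, Pi.add_apply]; ring

lemma ip_smul_left (a : ℝ) (u w : Fin 4 → ℝ) : ip (a • u) w = a * ip u w := by
  simp only [ip, Pi.smul_apply, smul_eq_mul]; ring

section Frame

variable (x : Fin 4 → ℝ)

lemma ip_Tf_self : ip (Tf x) x = 0 := by
  simp only [ip, Tf, Matrix.cons_val_zero, Matrix.cons_val_one, Matrix.cons_val]; ring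

lemma ip_Xf_self : ip (Xf x) x = 0 := by
  simp only [ip, Xf, Matrix.cons_val_zero, Matrix.cons_val_one, Matrix.cons_val]; ring

lemma ip_Tf_Yf : ip (Tf x) (Yf x) = 0 := by
  simp only [ip, Tf, Yf, Matrix.cons_val_zero, Matrix.cons_val_one, Matrix.cons_val]; ring

lemma ip_Xf_Yf : ip (Xf x) (Yf x) = 0 := by
  simp only [ip, Xf, Yf, Matrix.cons_val_zero, Matrix.cons_val_one, Matrix.cons_val]; ring

lemma ip_Tf_Xf : ip (Tf x) (Xf x) = 0 := by
  simp only [ip, Tf, Xf, Matrix.cons_val_zero, Matrix.cons_val_one, Matrix.cons_val]; ring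

lemma ip_Tf_Tf : ip (Tf x) (Tf x) = ip x x := by
  simp only [ip, Tf, Matrix.cons_val_zero, Matrix.cons_val_one, Matrix.cons_val]; ring

lemma ip_Xf_Xf : ip (Xf x) (Xf x) = -ip x x := by
  simp only [ip, Xf, Matrix.cons_val_zero, Matrix.cons_val_one, Matrix.cons_val]; ring

end Frame

section HorizontalVector

variable (a b : ℝ) (x : Fin 4 → ℝ)

lemma ip_horizontal_self : ip (a • Tf x + b • Xf x) x = 0 := by
  simp only [ip_add_left, ip_smul_left, ip_Tf_self, ip_Xf_self, mul_zero, add_zero]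

lemma ip_horizontal_Yf : ip (a • Tf x + b • Xf x) (Yf x) = 0 := by
  simp only [ip_add_left, ip_smul_left, ip_Tf_Yf, ip_Xf_Yf, mul_zero, add_zero]

lemma ip_horizontal_Tf : ip (a • Tf x + b • Xf x) (Tf x) = a * ip x x := by
  simp only [ip_add_left, ip_smul_left, ip_Tf_Tf, ip_comm (Xf x) (Tf x), ip_Tf_Xf, mul_zero,
    add_zero]

lemma ip_horizontal_Xf : ip (a • Tf x + b • Xf x) (Xf x) = -(b * ip x x) := by
  simp only [ip_add_left, ip_smul_left, ip_Tf_Xf, ip_Xf_Xf, mul_zero, zero_add, mul_neg]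

end HorizontalVector

lemma HasDerivAt.ip {c d : ℝ → Fin 4 → ℝ} {u v : Fin 4 → ℝ} {s : ℝ} (hc : HasDerivAt c u s)
    (hd : HasDerivAt d v s) :
    HasDerivAt (fun t => ip (c t) (d t)) (ip u (d s) + ip (c s) v) s := by
  have hci : ∀ i, HasDerivAt (fun t => c t i) (u i) s := hasDerivAt_pi.1 hc
  have hdi : ∀ i, HasDerivAt (fun t => d t i) (v i) s := hasDerivAt_pi.1 hd
  refine (((((hci 0).fun_mul (hdi 0)).fun_neg.fun_sub ((hci 1).fun_mul (hdi 1))).fun_add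
    ((hci 2).fun_mul (hdi 2))).fun_add ((hci 3).fun_mul (hdi 3))).congr_deriv ?_
  simp only [_root_.ip]; ring

lemma ip_self_eq_of_ip_deriv_self_eq_zero {c c' : ℝ → Fin 4 → ℝ}
    (hc : ∀ s, HasDerivAt c (c' s) s) (horth : ∀ s, ip (c' s) (c s) = 0) (s t : ℝ) :
    ip (c s) (c s) = ip (c t) (c t) := by
  have hF : ∀ s, HasDerivAt (fun t => ip (c t) (c t)) 0 s := fun s => by
    simpa [horth s, ip_comm (c s) (c' s)] using (hc s).ip (hc s)
  exact is_const_of_deriv_eq_zero (fun s => (hF s).differentiableAt) (fun s => (hF s).deriv) s t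

theorem hamiltonian_solutions_horizontal_general (x ξ : ℝ → Fin 4 → ℝ)
    (hx : ∀ s, HasDerivAt x
      ((-(tauF (x s) (ξ s))) • Tf (x s) + (sigmaF (x s) (ξ s)) • Xf (x s)) s)
    (h0 : x 0 ∈ AdS) :
    ∀ s, x s ∈ AdS ∧ gammaC x s = 0 ∧
      alphaC x s = tauF (x s) (ξ s) ∧ betaC x s = sigmaF (x s) (ξ s) := by
  intro s
  have hH : ip (x s) (x s) = -1 :=
    (ip_self_eq_of_ip_deriv_self_eq_zero hx (fun _ => ip_horizontal_self _ _ _) s 0).trans h0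
  rw [gammaC, alphaC, betaC, (hx s).deriv, ip_horizontal_Yf, ip_horizontal_Tf,
    ip_horizontal_Xf, hH]
  exact ⟨hH, rfl, by ring, by ring⟩

/-- solutions of the sub-Lorentzian Hamiltonian system
ẋ = −τ·T(x) + ς·X(x), ξ̇ = −τ·T(ξ) − ς·X(ξ) starting on AdS stay on AdS,
are horizontal with respect to span{T,X}, and have α = τ, β = ς. -/
theorem hamiltonian_solutions_horizontal (x ξ : ℝ → Fin 4 → ℝ)
    (hx : ∀ s, HasDerivAt x
      ((-(tauF (x s) (ξ s))) • Tf (x s) + (sigmaF (x s) (ξ s)) • Xf (x s)) s)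
    (hξ : ∀ s, HasDerivAt ξ
      ((-(tauF (x s) (ξ s))) • Tf (ξ s) + (-(sigmaF (x s) (ξ s))) • Xf (ξ s)) s)
    (h0 : x 0 ∈ AdS) :
    ∀ s, x s ∈ AdS ∧ gammaC x s = 0 ∧
      alphaC x s = tauF (x s) (ξ s) ∧ betaC x s = sigmaF (x s) (ξ s) :=
  hamiltonian_solutions_horizontal_general x ξ hx h0
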